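/- Let X, Y be real normed spaces, K ⊆ Y a pointed closed convex cone such that D_Y + K is closed, and F : X ⇉ Y an upper K-convex set-valued map with nonempty values. Let x̄ ∈ X be such that F(x̄) is K-sequentially compact. Then the Fréchet subdifferential of F at x̄ equals {T ∈ B(X,Y) : F(x) ⊆ F(x̄) + T(x − x̄) + K for all x ∈ X}. -/

import Mathlib

open Pointwise

def HasFrechetSubdiff {X Y : Type*} [NormedAddCommGroup X] [NormedSpace ℝ X]
    [NormedAddCommGroup Y] [NormedSpace ℝ Y]
    (F : X → Set Y) (K : Set Y) (x₀ : X) (T : X →L[ℝ] Y) : Prop :=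
  ∀ ε > (0:ℝ), ∃ δ > (0:ℝ), ∀ x, ‖x - x₀‖ < δ →
    F x ⊆ F x₀ + {T (x - x₀)} + (ε * ‖x - x₀‖) • Metric.closedBall (0:Y) 1 + K

/-- `A` is sequentially compact with respect to the cone `K`. -/
def KSeqCompact {Y : Type*} [NormedAddCommGroup Y] (K A : Set Y) : Prop :=
  ∀ a : ℕ → Y, (∀ n, a n ∈ A) → ∃ c : ℕ → Y, (∀ n, c n ∈ K) ∧
    ∃ φ : ℕ → ℕ, StrictMono φ ∧ ∃ l ∈ A,
      Filter.Tendsto (fun n => a (φ n) - c (φ n)) Filter.atTop (nhds l)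

/-! Fix `y ∈ F x` and put `w = y - T (x - x₀)`. Upper `K`-convexity along the segment from `x₀`
to `x`, combined with the subdifferential estimate at the nearby point `x₀ + t • (x - x₀)`,
gives `t • w + (1 - t) • z ∈ F x₀ + t • (ρ • D_Y + K)` for every `z ∈ F x₀`. Iterating this map
from a point of `F x₀` produces points of `F x₀ + (ρ • D_Y + K)` converging to `w`. Since
`K`-sequential compactness of `A` makes `A + B` closed whenever `B` is closed with `B + K ⊆ B`,
`w ∈ F x₀ + ρ • D_Y + K` for all `ρ > 0`, so `w` lies in the closure of `F x₀ + K`, which is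
`F x₀ + K`. -/

open Filter Topology Metric Set

section Cone

variable {Y : Type*} [NormedAddCommGroup Y] [NormedSpace ℝ Y] {K : Set Y}

lemma add_subset_of_convex_of_smul_mem (hKconv : Convex ℝ K)
    (hKcone : ∀ c : ℝ, 0 ≤ c → ∀ k ∈ K, c • k ∈ K) : K + K ⊆ K := by
  rintro _ ⟨a, ha, b, hb, rfl⟩
  convert hKcone 2 zero_le_two _ (hKconv ha hb (by norm_num : (0 : ℝ) ≤ 1 / 2)
    (by norm_num : (0 : ℝ) ≤ 1 / 2) (by norm_num)) using 1
  module

lemma smul_set_eq_of_smul_mem (hKcone : ∀ c : ℝ, 0 ≤ c → ∀ k ∈ K, c • k ∈ K)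
    {s : ℝ} (hs : 0 < s) : s • K = K := by
  refine (smul_set_subset_iff.2 fun k hk => hKcone s hs.le k hk).antisymm fun k hk => ?_
  exact ⟨s⁻¹ • k, hKcone _ (inv_nonneg.2 hs.le) k hk, smul_inv_smul₀ hs.ne' k⟩

lemma smul_closedBall_add_of_smul_mem (hKcone : ∀ c : ℝ, 0 ≤ c → ∀ k ∈ K, c • k ∈ K)
    {s ρ : ℝ} (hs : 0 < s) (hρ : 0 ≤ ρ) :
    s • (closedBall (0 : Y) ρ + K) = closedBall 0 (s * ρ) + K := by
  rw [smul_add, smul_closedBall _ _ hρ, smul_zero, Real.norm_of_nonneg hs.le,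
    smul_set_eq_of_smul_mem hKcone hs]

lemma isClosed_closedBall_add_of_smul_mem (hKcone : ∀ c : ℝ, 0 ≤ c → ∀ k ∈ K, c • k ∈ K)
    (hDK : IsClosed (closedBall (0 : Y) 1 + K)) {ρ : ℝ} (hρ : 0 < ρ) :
    IsClosed (closedBall (0 : Y) ρ + K) := by
  simpa [smul_closedBall_add_of_smul_mem hKcone hρ zero_le_one] using
    hDK.smul_of_ne_zero hρ.ne'

end Cone

lemma mem_closure_of_forall_mem_add_closedBall {Y : Type*} [SeminormedAddCommGroup Y]
    {S : Set Y} {w : Y} (h : ∀ ρ > 0, w ∈ S + closedBall 0 ρ) : w ∈ closure S := by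
  refine Metric.mem_closure_iff.2 fun δ hδ => ?_
  obtain ⟨s, hs, v, hv, rfl⟩ := h (δ / 2) (half_pos hδ)
  refine ⟨s, hs, ?_⟩
  rw [dist_eq_norm, add_sub_cancel_left]
  exact (mem_closedBall_zero_iff.1 hv).trans_lt (half_lt_self hδ)

lemma KSeqCompact.isClosed_add {Y : Type*} [NormedAddCommGroup Y] {K A B : Set Y}
    (hA : KSeqCompact K A) (hB : IsClosed B) (hBK : B + K ⊆ B) : IsClosed (A + B) := by
  refine IsSeqClosed.isClosed fun p w hp hlim => ?_
  choose a ha b hb hab using hp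
  obtain ⟨c, hc, φ, hφ, l, hl, hlim'⟩ := hA a ha
  have hbc : Tendsto (fun n => b (φ n) + c (φ n)) atTop (𝓝 (w - l)) := by
    refine ((hlim.comp hφ.tendsto_atTop).sub hlim').congr fun n => ?_
    simp only [Function.comp_apply, ← hab]
    abel
  have hwl : w - l ∈ B :=
    hB.mem_of_tendsto hbc (.of_forall fun n => hBK (add_mem_add (hb _) (hc _)))
  exact ⟨l, hl, w - l, hwl, add_sub_cancel l w⟩

section Iteration

variable {Y : Type*} [NormedAddCommGroup Y] [NormedSpace ℝ Y] {A B : Set Y} {a w : Y} {t : ℝ}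

lemma one_sub_pow_smul_add_mem_add (hB : Convex ℝ B) (h0 : 0 ∈ B) (ha : a ∈ A)
    (ht0 : 0 ≤ t) (ht1 : t ≤ 1) (hstep : ∀ z ∈ A, t • w + (1 - t) • z ∈ A + t • B)
    (n : ℕ) : (1 - t) ^ n • a + (1 - (1 - t) ^ n) • w ∈ A + B := by
  induction n with
  | zero => simpa using add_mem_add ha h0
  | succ n ih =>
    obtain ⟨z, hz, b, hb, hzb : z + b = _⟩ := ih
    obtain ⟨u, hu, _, ⟨b', hb', rfl⟩, hub' : u + t • b' = _⟩ := hstep z hz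
    have hrec : (1 - t) ^ (n + 1) • a + (1 - (1 - t) ^ (n + 1)) • w
        = t • w + (1 - t) • (z + b) := by
      rw [hzb]; module
    rw [hrec, smul_add, ← add_assoc, ← hub', add_assoc]
    exact add_mem_add hu (hB hb' hb ht0 (by linarith) (by ring))

lemma tendsto_one_sub_pow_smul_add (ht0 : 0 < t) (ht1 : t ≤ 1) :
    Tendsto (fun n : ℕ => (1 - t) ^ n • a + (1 - (1 - t) ^ n) • w) atTop (𝓝 w) := by
  have h := tendsto_pow_atTop_nhds_zero_of_lt_one (by linarith : 0 ≤ 1 - t) (by linarith)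
  simpa using (h.smul_const a).add (((tendsto_const_nhds (x := (1 : ℝ))).sub h).smul_const w)

lemma KSeqCompact.mem_add_of_forall_smul_add_mem {K : Set Y} (hA : KSeqCompact K A)
    (hBc : IsClosed B) (hBK : B + K ⊆ B) (hB : Convex ℝ B) (h0 : 0 ∈ B) (ha : a ∈ A)
    (ht0 : 0 < t) (ht1 : t ≤ 1) (hstep : ∀ z ∈ A, t • w + (1 - t) • z ∈ A + t • B) :
    w ∈ A + B :=
  (hA.isClosed_add hBc hBK).mem_of_tendsto (tendsto_one_sub_pow_smul_add ht0 ht1)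
    (.of_forall (one_sub_pow_smul_add_mem_add hB h0 ha ht0.le ht1 hstep))

end Iteration

section Subdifferential

variable {X Y : Type*} [NormedAddCommGroup X] [NormedSpace ℝ X]
  [NormedAddCommGroup Y] [NormedSpace ℝ Y] {F : X → Set Y} {K : Set Y} {x₀ : X}
  {T : X →L[ℝ] Y}

lemma hasFrechetSubdiff_of_subset_add (h : ∀ x, F x ⊆ F x₀ + {T (x - x₀)} + K) :
    HasFrechetSubdiff F K x₀ T := fun _ _ =>
  ⟨1, one_pos, fun x _ => (h x).trans <| add_subset_add_right <|
    subset_add_left _ <| zero_mem_smul_set <| mem_closedBall_self zero_le_one⟩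

lemma HasFrechetSubdiff.exists_smul_add_mem (hT : HasFrechetSubdiff F K x₀ T)
    (hKcone : ∀ c : ℝ, 0 ≤ c → ∀ k ∈ K, c • k ∈ K) (hKadd : K + K ⊆ K)
    (hFconv : ∀ x y : X, ∀ t : ℝ, 0 < t → t < 1 →
      t • F x + (1 - t) • F y ⊆ F (t • x + (1 - t) • y) + K)
    {x : X} {y : Y} (hy : y ∈ F x) {ρ : ℝ} (hρ : 0 < ρ) :
    ∃ t : ℝ, 0 < t ∧ t ≤ 1 ∧ ∀ z ∈ F x₀,
      t • (y - T (x - x₀)) + (1 - t) • z ∈ F x₀ + t • (closedBall 0 ρ + K) := by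
  obtain ⟨ε, hε, hερ⟩ := exists_pos_mul_lt hρ ‖x - x₀‖
  obtain ⟨δ, hδ, hδF⟩ := hT ε hε
  obtain ⟨c, hc, hcδ⟩ := exists_pos_mul_lt hδ ‖x - x₀‖
  set t := min c (1 / 2)
  have ht0 : 0 < t := lt_min hc one_half_pos
  have ht1 : t < 1 := (min_le_right _ _).trans_lt one_half_lt_one
  have hxt : t • x + (1 - t) • x₀ - x₀ = t • (x - x₀) := by module
  have hnorm : ‖t • x + (1 - t) • x₀ - x₀‖ = t * ‖x - x₀‖ := by
    rw [hxt, norm_smul, Real.norm_of_nonneg ht0.le]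
  have hclose : ‖t • x + (1 - t) • x₀ - x₀‖ < δ := by
    rw [hnorm]
    nlinarith [min_le_left c (1 / 2), norm_nonneg (x - x₀)]
  refine ⟨t, ht0, ht1.le, fun z hz => ?_⟩
  obtain ⟨f, hf, k₀, hk₀, hfk₀ : f + k₀ = _⟩ :=
    hFconv x x₀ t ht0 ht1 (add_mem_add (smul_mem_smul_set hy) (smul_mem_smul_set hz))
  obtain ⟨_, ⟨_, ⟨u, hu, _, rfl, rfl⟩, s, hs, rfl⟩, k₁, hk₁, rfl⟩ := hδF _ hclose hf
  rw [smul_closedBall_add_of_smul_mem hKcone ht0 hρ.le]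
  refine ⟨u, hu, s + (k₁ + k₀), add_mem_add ?_ (hKadd (add_mem_add hk₁ hk₀)), ?_⟩
  · rw [_root_.smul_closedBall _ _ zero_le_one, smul_zero, mul_one,
      Real.norm_of_nonneg (by positivity), hnorm] at hs
    exact closedBall_subset_closedBall (by nlinarith) hs
  · have hfk : u + t • T (x - x₀) + s + k₁ + k₀ = t • y + (1 - t) • z := by
      simpa only [hxt, map_smul] using hfk₀
    change u + (s + (k₁ + k₀)) = _
    rw [smul_sub, sub_add_eq_add_sub, ← hfk]
    abel

lemma HasFrechetSubdiff.subset_add (hT : HasFrechetSubdiff F K x₀ T)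
    (hKclosed : IsClosed K) (hKconv : Convex ℝ K)
    (hKcone : ∀ c : ℝ, 0 ≤ c → ∀ k ∈ K, c • k ∈ K) (hK0 : (0 : Y) ∈ K)
    (hDK : IsClosed (closedBall (0 : Y) 1 + K))
    (hFconv : ∀ x y : X, ∀ t : ℝ, 0 < t → t < 1 →
      t • F x + (1 - t) • F y ⊆ F (t • x + (1 - t) • y) + K)
    {a₀ : Y} (ha₀ : a₀ ∈ F x₀) (hcomp : KSeqCompact K (F x₀)) (x : X) :
    F x ⊆ F x₀ + {T (x - x₀)} + K := by
  intro y hy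
  have hKadd := add_subset_of_convex_of_smul_mem hKconv hKcone
  have hw : y - T (x - x₀) ∈ F x₀ + K := by
    rw [← (hcomp.isClosed_add hKclosed hKadd).closure_eq]
    refine mem_closure_of_forall_mem_add_closedBall fun ρ hρ => ?_
    obtain ⟨t, ht0, ht1, hstep⟩ := hT.exists_smul_add_mem hKcone hKadd hFconv hy hρ
    rw [add_assoc, add_comm K]
    exact hcomp.mem_add_of_forall_smul_add_mem
      (isClosed_closedBall_add_of_smul_mem hKcone hDK hρ)
      (by rw [add_assoc]; exact add_subset_add_left hKadd)
      ((convex_closedBall 0 ρ).add hKconv) ⟨0, mem_closedBall_self hρ.le, 0, hK0, add_zero 0⟩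
      ha₀ ht0 ht1 hstep
  obtain ⟨a, ha, k, hk, hak : a + k = _⟩ := hw
  refine ⟨a + T (x - x₀), add_mem_add ha rfl, k, hk, ?_⟩
  change a + T (x - x₀) + k = y
  rw [add_right_comm, hak, sub_add_cancel]

end Subdifferential

theorem stmt7_general {X Y : Type*} [NormedAddCommGroup X] [NormedSpace ℝ X]
    [NormedAddCommGroup Y] [NormedSpace ℝ Y]
    (K : Set Y) (hKclosed : IsClosed K) (hKconv : Convex ℝ K)
    (hKcone : ∀ c : ℝ, 0 ≤ c → ∀ k ∈ K, c • k ∈ K)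
    (hDK : IsClosed (Metric.closedBall (0:Y) 1 + K))
    (F : X → Set Y) (hF : ∀ x, (F x).Nonempty)
    (hFconv : ∀ x y : X, ∀ t : ℝ, 0 < t → t < 1 →
      t • F x + (1 - t) • F y ⊆ F (t • x + (1 - t) • y) + K)
    (x₀ : X) (hcomp : KSeqCompact K (F x₀)) :
    {T : X →L[ℝ] Y | HasFrechetSubdiff F K x₀ T} =
      {T : X →L[ℝ] Y | ∀ x, F x ⊆ F x₀ + {T (x - x₀)} + K} := by
  obtain ⟨a₀, ha₀⟩ := hF x₀
  have hK0 : (0 : Y) ∈ K := by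
    obtain ⟨-, -, k, hk, -⟩ := hFconv x₀ x₀ (1 / 2) one_half_pos one_half_lt_one
      (add_mem_add (smul_mem_smul_set ha₀) (smul_mem_smul_set ha₀))
    simpa using hKcone 0 le_rfl k hk
  ext T
  exact ⟨fun hT => hT.subset_add hKclosed hKconv hKcone hK0 hDK hFconv ha₀ hcomp,
    hasFrechetSubdiff_of_subset_add⟩

theorem stmt7 {X Y : Type*} [NormedAddCommGroup X] [NormedSpace ℝ X]
    [NormedAddCommGroup Y] [NormedSpace ℝ Y]
    (K : Set Y) (hKclosed : IsClosed K) (hKconv : Convex ℝ K)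
    (hKcone : ∀ c : ℝ, 0 ≤ c → ∀ k ∈ K, c • k ∈ K)
    (hKpointed : K ∩ (-K) ⊆ {0})
    (hDK : IsClosed (Metric.closedBall (0:Y) 1 + K))
    (F : X → Set Y) (hF : ∀ x, (F x).Nonempty)
    (hFconv : ∀ x y : X, ∀ t : ℝ, 0 < t → t < 1 →
      t • F x + (1 - t) • F y ⊆ F (t • x + (1 - t) • y) + K)
    (x₀ : X) (hcomp : KSeqCompact K (F x₀)) :
    {T : X →L[ℝ] Y | HasFrechetSubdiff F K x₀ T} =
      {T : X →L[ℝ] Y | ∀ x, F x ⊆ F x₀ + {T (x - x₀)} + K} :=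
  stmt7_general K hKclosed hKconv hKcone hDK F hF hFconv x₀ hcomp
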